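/- arXiv:1205.0616 — 2 statements merged into one kernel-verified Lean document; each statement's English description precedes it below -/
import Mathlib

section
/- Under condition (C1) (∑ a_k = 1, a_k ≥ 0), there exist constants C > 0 and n_0 such that for all integers n ≥ n_0, the integral ∫_{-∞}^{∞} dy / |G_n(1+iy)|^2 ≤ C, where G_n(z) = z + n^2 ∑_k a_k/(z + b_k). -/
open Complex MeasureTheory

/-!
Write `G = G_n` and `w_k = 1 + b_k`. On the line `z = 1 + iy` every term `a_k / (w_k + iy)` has
nonnegative real part, so `|G|² ≥ 1 + (Im G)²` with `Im G = y (1 - n² S(y²))`, where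
`S(u) = ∑ a_k / (w_k² + u)` decreases from `S(0) ≥ a_k / w_k²` to `S(u) ≤ 1 / (1 + u)`. Hence for
large `n` there is `y₀ ∈ (0, n]` with `n² S(y₀²) = 1`, and `y₀² ≍ n²`. Writing
`1 - n² S(y²) = n² (S(y₀²) - S(y²))` and keeping a single term `a_k > 0` of the difference gives
`|Im G| ≥ (a_k / 4) min(|y|, |y - y₀|, |y + y₀|)`. So `1 / |G|²` is dominated by three Cauchy
kernels of width `4 / a_k` centred at `0, ±y₀`, whose integrals `4π / a_k` do not depend on `n`.
-/

noncomputable section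

lemma summable_div_of_one_le {a f : ℕ → ℝ} (ha : ∀ k, 0 ≤ a k) (hsum : Summable a)
    (hf : ∀ k, 1 ≤ f k) : Summable fun k => a k / f k :=
  hsum.of_nonneg_of_le (fun k => div_nonneg (ha k) (zero_le_one.trans (hf k)))
    fun k => div_le_self (ha k) (hf k)

lemma one_le_one_add_sq_add {β u : ℝ} (hβ : 0 ≤ β) (hu : 0 ≤ u) : 1 ≤ (1 + β) ^ 2 + u := by
  nlinarith

def stieltjesSum (a b : ℕ → ℝ) (u : ℝ) : ℝ := ∑' k, a k / ((1 + b k) ^ 2 + u)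

namespace stieltjesSum

variable {a b : ℕ → ℝ}

lemma summable (ha : ∀ k, 0 ≤ a k) (hb : ∀ k, 0 ≤ b k) (hsum : Summable a) {u : ℝ}
    (hu : 0 ≤ u) : Summable fun k => a k / ((1 + b k) ^ 2 + u) :=
  summable_div_of_one_le ha hsum fun k => one_le_one_add_sq_add (hb k) hu

lemma div_le (ha : ∀ k, 0 ≤ a k) (hb : ∀ k, 0 ≤ b k) (hsum : Summable a) (k : ℕ) {u : ℝ}
    (hu : 0 ≤ u) : a k / ((1 + b k) ^ 2 + u) ≤ stieltjesSum a b u :=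
  (summable ha hb hsum hu).le_tsum k fun j _ =>
    div_nonneg (ha j) (zero_le_one.trans (one_le_one_add_sq_add (hb j) hu))

lemma le_one_div_one_add (ha : ∀ k, 0 ≤ a k) (hb : ∀ k, 0 ≤ b k) (hsum : Summable a)
    (h1 : ∑' k, a k = 1) {u : ℝ} (hu : 0 ≤ u) : stieltjesSum a b u ≤ 1 / (1 + u) := by
  calc stieltjesSum a b u ≤ ∑' k, a k / (1 + u) :=
        (summable ha hb hsum hu).tsum_le_tsum
          (fun k => div_le_div_of_nonneg_left (ha k) (by positivity) (by nlinarith [hb k]))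
          (hsum.div_const _)
    _ = 1 / (1 + u) := by rw [tsum_div_const, h1]

lemma sub_eq (ha : ∀ k, 0 ≤ a k) (hb : ∀ k, 0 ≤ b k) (hsum : Summable a) {u v : ℝ}
    (hu : 0 ≤ u) (hv : 0 ≤ v) :
    stieltjesSum a b u - stieltjesSum a b v =
      (v - u) * ∑' k, a k / (((1 + b k) ^ 2 + u) * ((1 + b k) ^ 2 + v)) := by
  rw [stieltjesSum, stieltjesSum, ← (summable ha hb hsum hu).tsum_sub (summable ha hb hsum hv),
    ← tsum_mul_left]
  refine tsum_congr fun k => ?_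
  have := one_le_one_add_sq_add (hb k) hu
  have := one_le_one_add_sq_add (hb k) hv
  field_simp
  ring

lemma continuous_comp_sq (ha : ∀ k, 0 ≤ a k) (hb : ∀ k, 0 ≤ b k) (hsum : Summable a) :
    Continuous fun y : ℝ => stieltjesSum a b (y ^ 2) := by
  refine continuous_tsum (fun k => ?_) hsum fun k y => ?_
  · exact continuous_const.div (by fun_prop) fun y =>
      (zero_lt_one.trans_le (one_le_one_add_sq_add (hb k) (sq_nonneg y))).ne'
  · have h := one_le_one_add_sq_add (hb k) (sq_nonneg y)
    rw [Real.norm_of_nonneg (div_nonneg (ha k) (by linarith))]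
    exact div_le_self (ha k) h

lemma exists_mul_eq_one (ha : ∀ k, 0 ≤ a k) (hb : ∀ k, 0 ≤ b k) (hsum : Summable a)
    (h1 : ∑' k, a k = 1) {k : ℕ} (hk1 : a k ≤ 1) {N : ℝ} (hN : 0 ≤ N)
    (hlarge : 2 * (1 + b k) ^ 2 ≤ a k * N ^ 2) :
    ∃ y0, 0 < y0 ∧ N ^ 2 * stieltjesSum a b (y0 ^ 2) = 1 ∧
      (1 + b k) ^ 2 ≤ y0 ^ 2 ∧ (1 + b k) ^ 2 + y0 ^ 2 ≤ 2 * N ^ 2 := by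
  have hw : 1 ≤ (1 + b k) ^ 2 := by simpa using one_le_one_add_sq_add (hb k) le_rfl
  have hat0 : 1 < N ^ 2 * stieltjesSum a b (0 ^ 2) := by
    have h := div_le ha hb hsum k le_rfl
    rw [add_zero, div_le_iff₀ (by linarith)] at h
    rw [zero_pow two_ne_zero]
    nlinarith
  have hatN : N ^ 2 * stieltjesSum a b (N ^ 2) < 1 := by
    have h := le_one_div_one_add ha hb hsum h1 (sq_nonneg N)
    rw [le_div_iff₀ (by positivity)] at h
    nlinarith
  obtain ⟨y0, ⟨hy0, hy0N⟩, hcross⟩ := intermediate_value_Icc' hN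
    (continuous_const.mul (continuous_comp_sq ha hb hsum)).continuousOn ⟨hatN.le, hat0.le⟩
  have hcross : N ^ 2 * stieltjesSum a b (y0 ^ 2) = 1 := hcross
  have hlow : a k * N ^ 2 ≤ (1 + b k) ^ 2 + y0 ^ 2 := by
    have h := div_le ha hb hsum k (sq_nonneg y0)
    rw [div_le_iff₀ (by positivity)] at h
    nlinarith
  refine ⟨y0, ?_, hcross, by linarith, by nlinarith⟩
  exact hy0.lt_of_ne fun h => by subst h; nlinarith

lemma mul_abs_le_abs_mul_one_sub (ha : ∀ k, 0 ≤ a k) (hb : ∀ k, 0 ≤ b k) (hsum : Summable a)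
    {k : ℕ} {ν y0 : ℝ} (hν : 0 ≤ ν) (hy0 : ν * stieltjesSum a b (y0 ^ 2) = 1)
    (hw : (1 + b k) ^ 2 ≤ y0 ^ 2) (hD : (1 + b k) ^ 2 + y0 ^ 2 ≤ 2 * ν) (y : ℝ) :
    a k * |y * (y ^ 2 - y0 ^ 2)| ≤
      2 * (y ^ 2 + y0 ^ 2) * |y * (1 - ν * stieltjesSum a b (y ^ 2))| := by
  set T := ∑' j, a j / (((1 + b j) ^ 2 + y0 ^ 2) * ((1 + b j) ^ 2 + y ^ 2))
  have hden : ∀ j, 1 ≤ ((1 + b j) ^ 2 + y0 ^ 2) * ((1 + b j) ^ 2 + y ^ 2) := fun j =>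
    one_le_mul_of_one_le_of_one_le (one_le_one_add_sq_add (hb j) (sq_nonneg y0))
      (one_le_one_add_sq_add (hb j) (sq_nonneg y))
  have hT : a k / (((1 + b k) ^ 2 + y0 ^ 2) * ((1 + b k) ^ 2 + y ^ 2)) ≤ T :=
    (summable_div_of_one_le ha hsum hden).le_tsum k fun j _ =>
      div_nonneg (ha j) (zero_le_one.trans (hden j))
  have hT0 : 0 ≤ T := (div_nonneg (ha k) (zero_le_one.trans (hden k))).trans hT
  have hX : y * (1 - ν * stieltjesSum a b (y ^ 2)) = ν * T * (y * (y ^ 2 - y0 ^ 2)) := by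
    rw [← hy0, ← mul_sub, sub_eq ha hb hsum (sq_nonneg _) (sq_nonneg _)]
    ring
  have hak : a k ≤ 2 * (y ^ 2 + y0 ^ 2) * (ν * T) := by
    rw [div_le_iff₀ (zero_lt_one.trans_le (hden k))] at hT
    calc a k ≤ T * (((1 + b k) ^ 2 + y0 ^ 2) * ((1 + b k) ^ 2 + y ^ 2)) := hT
      _ ≤ T * (2 * ν * (y ^ 2 + y0 ^ 2)) :=
        mul_le_mul_of_nonneg_left (mul_le_mul hD (by linarith) (by positivity) (by linarith)) hT0
      _ = _ := by ring
  rw [hX, abs_mul (ν * T), abs_of_nonneg (mul_nonneg hν hT0), ← mul_assoc]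
  exact mul_le_mul_of_nonneg_right hak (abs_nonneg _)

end stieltjesSum

def gurtinPipkinSymbol (a b : ℕ → ℝ) (n : ℕ) (z : ℂ) : ℂ :=
  z + (n : ℂ) ^ 2 * ∑' k, (a k : ℂ) / (z + (b k : ℂ))

namespace gurtinPipkinSymbol

variable {a b : ℕ → ℝ}

lemma re_ofReal_div (c w y : ℝ) :
    ((c : ℂ) / (1 + y * I + w)).re = c * (1 + w) / ((1 + w) ^ 2 + y ^ 2) := by
  simp only [div_re, ofReal_re, add_re, one_re, mul_re, I_re, mul_zero, ofReal_im, I_im, mul_one,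
    sub_self, add_zero, normSq_apply, add_im, one_im, mul_im, zero_add, zero_mul, zero_div]
  ring

lemma im_ofReal_div (c w y : ℝ) :
    ((c : ℂ) / (1 + y * I + w)).im = -(y * (c / ((1 + w) ^ 2 + y ^ 2))) := by
  simp only [div_im, ofReal_im, add_re, one_re, mul_re, ofReal_re, I_re, mul_zero, I_im, mul_one,
    sub_self, add_zero, zero_mul, normSq_apply, add_im, one_im, mul_im, zero_add, zero_div,
    zero_sub, neg_inj]
  ring

lemma summable (ha : ∀ k, 0 ≤ a k) (hb : ∀ k, 0 ≤ b k) (hsum : Summable a) (y : ℝ) :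
    Summable fun k => (a k : ℂ) / (1 + y * I + b k) := by
  refine hsum.of_norm_bounded fun k => ?_
  have h : 1 ≤ ‖1 + y * I + (b k : ℂ)‖ := le_trans (by simp [hb k]) (re_le_norm _)
  rw [norm_div, norm_real, Real.norm_of_nonneg (ha k)]
  exact div_le_self (ha k) h

lemma one_le_re (ha : ∀ k, 0 ≤ a k) (hb : ∀ k, 0 ≤ b k) (hsum : Summable a) (n : ℕ) (y : ℝ) :
    1 ≤ (gurtinPipkinSymbol a b n (1 + y * I)).re := by
  have hre : 0 ≤ (∑' k, (a k : ℂ) / (1 + y * I + b k)).re := by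
    rw [re_tsum (summable ha hb hsum y)]
    refine tsum_nonneg fun k => ?_
    rw [re_ofReal_div]
    have := one_le_one_add_sq_add (hb k) (sq_nonneg y)
    exact div_nonneg (mul_nonneg (ha k) (by linarith [hb k])) (by linarith)
  have hn : ((n : ℂ) ^ 2) = ((n ^ 2 : ℝ) : ℂ) := by push_cast; ring
  rw [gurtinPipkinSymbol, add_re, hn, re_ofReal_mul]
  simp only [add_re, one_re, mul_re, ofReal_re, I_re, ofReal_im, I_im]
  nlinarith

lemma im_eq (ha : ∀ k, 0 ≤ a k) (hb : ∀ k, 0 ≤ b k) (hsum : Summable a) (n : ℕ) (y : ℝ) :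
    (gurtinPipkinSymbol a b n (1 + y * I)).im = y * (1 - n ^ 2 * stieltjesSum a b (y ^ 2)) := by
  have him : (∑' k, (a k : ℂ) / (1 + y * I + b k)).im = -(y * stieltjesSum a b (y ^ 2)) := by
    rw [im_tsum (summable ha hb hsum y), stieltjesSum, ← tsum_mul_left, ← tsum_neg]
    exact tsum_congr fun k => im_ofReal_div _ _ _
  have hn : ((n : ℂ) ^ 2) = ((n ^ 2 : ℝ) : ℂ) := by push_cast; ring
  rw [gurtinPipkinSymbol, add_im, hn, im_ofReal_mul, him]
  simp only [add_im, one_im, mul_im, ofReal_re, I_im, mul_one, ofReal_im, I_re, mul_zero,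
    add_zero, zero_add, mul_neg]
  ring

lemma one_add_sq_im_le_norm_sq (ha : ∀ k, 0 ≤ a k) (hb : ∀ k, 0 ≤ b k) (hsum : Summable a)
    (n : ℕ) (y : ℝ) :
    1 + (y * (1 - n ^ 2 * stieltjesSum a b (y ^ 2))) ^ 2 ≤
      ‖gurtinPipkinSymbol a b n (1 + y * I)‖ ^ 2 := by
  rw [Complex.sq_norm, normSq_apply, ← im_eq ha hb hsum]
  nlinarith [one_le_re ha hb hsum n y]

end gurtinPipkinSymbol

def cauchyKernel (c x : ℝ) : ℝ := (1 + (c * x) ^ 2)⁻¹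

lemma cauchyKernel_nonneg (c x : ℝ) : 0 ≤ cauchyKernel c x := by
  unfold cauchyKernel; positivity

lemma inv_one_add_sq_le_cauchyKernel {c x X : ℝ} (hc : 0 ≤ c) (h : c * |x| ≤ |X|) :
    (1 + X ^ 2)⁻¹ ≤ cauchyKernel c x := by
  have : (c * x) ^ 2 ≤ X ^ 2 := by
    rw [← sq_abs X, ← sq_abs (c * x), abs_mul, abs_of_nonneg hc]
    exact pow_le_pow_left₀ (by positivity) h 2
  exact inv_anti₀ (by positivity) (by linarith)

lemma integrable_cauchyKernel {c : ℝ} (hc : 0 < c) (s : ℝ) :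
    Integrable fun y => cauchyKernel c (y - s) := by
  have h : Integrable fun x : ℝ => cauchyKernel c x := by
    simpa [cauchyKernel, smul_eq_mul] using (integrable_comp_smul_iff volume
      (fun x : ℝ => (1 + x ^ 2)⁻¹) hc.ne').2 integrable_inv_one_add_sq
  exact h.comp_sub_right s

lemma integral_cauchyKernel {c : ℝ} (hc : 0 < c) (s : ℝ) :
    ∫ y, cauchyKernel c (y - s) = Real.pi / c := by
  rw [integral_sub_right_eq_self (fun y => cauchyKernel c y) s]
  have := Measure.integral_comp_mul_left (fun x : ℝ => (1 + x ^ 2)⁻¹) c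
  rw [integral_univ_inv_one_add_sq, abs_of_pos (inv_pos.2 hc), smul_eq_mul] at this
  simp only [cauchyKernel]
  rw [this, inv_mul_eq_div]

lemma exists_mul_abs_sub_le {y0 : ℝ} (hy0 : 0 < y0) (y : ℝ) :
    ∃ s ∈ ({0, y0, -y0} : Set ℝ), (y ^ 2 + y0 ^ 2) * |y - s| ≤ 2 * |y * (y ^ 2 - y0 ^ 2)| := by
  have hfac : |y * (y ^ 2 - y0 ^ 2)| = |y| * (|y - y0| * |y + y0|) := by
    rw [← abs_mul, ← abs_mul]; ring_nf
  rw [hfac]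
  by_cases hsmall : 3 * y ^ 2 ≤ y0 ^ 2
  · refine ⟨0, by simp, ?_⟩
    rw [sub_zero, ← abs_mul, mul_comm (|y|)]
    have : y ^ 2 + y0 ^ 2 ≤ 2 * |(y - y0) * (y + y0)| := by
      rw [abs_of_nonpos (by nlinarith)]; nlinarith
    exact (mul_le_mul_of_nonneg_right this (abs_nonneg y)).trans_eq (by ring)
  rcases le_or_gt 0 y with hy | hy
  · refine ⟨y0, by simp, ?_⟩
    rw [abs_of_nonneg hy, abs_of_pos (by linarith : 0 < y + y0)]
    have : y ^ 2 + y0 ^ 2 ≤ 2 * (y * (y + y0)) := by nlinarith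
    exact (mul_le_mul_of_nonneg_right this (abs_nonneg (y - y0))).trans_eq (by ring)
  · refine ⟨-y0, by simp, ?_⟩
    rw [sub_neg_eq_add, abs_of_neg hy, abs_of_neg (by linarith : y - y0 < 0)]
    have : y ^ 2 + y0 ^ 2 ≤ 2 * (-y * -(y - y0)) := by nlinarith
    exact (mul_le_mul_of_nonneg_right this (abs_nonneg (y + y0))).trans_eq (by ring)

lemma inv_norm_sq_gurtinPipkinSymbol_le {a b : ℕ → ℝ} (ha : ∀ k, 0 ≤ a k) (hb : ∀ k, 0 ≤ b k)
    (hsum : Summable a) {k n : ℕ} {y0 : ℝ} (hk : 0 < a k) (hy0pos : 0 < y0)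
    (hy0 : (n : ℝ) ^ 2 * stieltjesSum a b (y0 ^ 2) = 1) (hw : (1 + b k) ^ 2 ≤ y0 ^ 2)
    (hD : (1 + b k) ^ 2 + y0 ^ 2 ≤ 2 * (n : ℝ) ^ 2) (y : ℝ) :
    1 / ‖gurtinPipkinSymbol a b n (1 + y * I)‖ ^ 2 ≤
      cauchyKernel (a k / 4) y + cauchyKernel (a k / 4) (y - y0) +
        cauchyKernel (a k / 4) (y + y0) := by
  set X := y * (1 - n ^ 2 * stieltjesSum a b (y ^ 2))
  obtain ⟨s, hs, hdist⟩ := exists_mul_abs_sub_le hy0pos y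
  have hX := stieltjesSum.mul_abs_le_abs_mul_one_sub ha hb hsum (sq_nonneg (n : ℝ)) hy0 hw hD y
  have hc : a k / 4 * |y - s| ≤ |X| := by
    refine le_of_mul_le_mul_left ?_ (by positivity : 0 < y ^ 2 + y0 ^ 2)
    nlinarith [mul_le_mul_of_nonneg_left hdist hk.le]
  have hG : 1 / ‖gurtinPipkinSymbol a b n (1 + y * I)‖ ^ 2 ≤ (1 + X ^ 2)⁻¹ := by
    rw [one_div]
    exact inv_anti₀ (by positivity) (gurtinPipkinSymbol.one_add_sq_im_le_norm_sq ha hb hsum n y)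
  have hK := inv_one_add_sq_le_cauchyKernel (by positivity) hc
  have h0 := cauchyKernel_nonneg (a k / 4) y
  have h1 := cauchyKernel_nonneg (a k / 4) (y - y0)
  have h2 := cauchyKernel_nonneg (a k / 4) (y + y0)
  rcases hs with rfl | rfl | rfl
  · rw [sub_zero] at hK; linarith
  · linarith
  · rw [sub_neg_eq_add] at hK; linarith

end

theorem inv_Gn_L2_bound (a b : ℕ → ℝ) (ha : ∀ k, 0 ≤ a k) (hb0 : 0 ≤ b 0)
    (hb : StrictMono b) (hsum : Summable a) (h1 : ∑' k, a k = 1) :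
    ∃ C : ℝ, 0 < C ∧ ∃ n0 : ℕ, ∀ n : ℕ, n0 ≤ n →
      ∫ y : ℝ, 1 / ‖(1 + y * I) + (n : ℂ)^2 * ∑' k, (a k : ℂ) / ((1 + y * I) + (b k : ℂ))‖^2 ≤ C := by
  have hb' : ∀ k, 0 ≤ b k := fun k => hb0.trans (hb.monotone k.zero_le)
  obtain ⟨k, hk⟩ : ∃ k, 0 < a k := by
    by_contra! h
    simp [le_antisymm (h _) (ha _)] at h1
  have hk1 : a k ≤ 1 := h1 ▸ hsum.le_tsum k fun j _ => ha j
  have hc : 0 < a k / 4 := by positivity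
  refine ⟨3 * (Real.pi / (a k / 4)), by positivity, ⌈2 * (1 + b k) ^ 2 / a k⌉₊ + 1,
    fun n hn => ?_⟩
  have hlarge : 2 * (1 + b k) ^ 2 ≤ a k * (n : ℝ) ^ 2 := by
    have hn1 : (1 : ℝ) ≤ n := by exact_mod_cast le_add_self.trans hn
    have hn2 : 2 * (1 + b k) ^ 2 / a k ≤ n :=
      (Nat.le_ceil _).trans (by exact_mod_cast (Nat.le_succ _).trans hn)
    rw [div_le_iff₀ hk] at hn2
    nlinarith
  obtain ⟨y0, hy0pos, hy0, hw, hD⟩ :=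
    stieltjesSum.exists_mul_eq_one ha hb' hsum h1 hk1 n.cast_nonneg hlarge
  have hK : ∀ s, Integrable fun y => cauchyKernel (a k / 4) (y - s) := integrable_cauchyKernel hc
  calc _ ≤ ∫ y, cauchyKernel (a k / 4) (y - 0) + cauchyKernel (a k / 4) (y - y0) +
          cauchyKernel (a k / 4) (y - -y0) := by
        refine integral_mono_of_nonneg (ae_of_all _ fun y => by positivity)
          (((hK 0).add (hK y0)).add (hK (-y0))) (ae_of_all _ fun y => ?_)
        refine (inv_norm_sq_gurtinPipkinSymbol_le ha hb' hsum hk hy0pos hy0 hw hD y).trans_eq ?_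
        simp only [sub_zero, sub_neg_eq_add]
    _ = 3 * (Real.pi / (a k / 4)) := by
        rw [integral_add (by exact (hK 0).add (hK y0)) (hK (-y0)), integral_add (hK 0) (hK y0)]
        simp only [integral_cauchyKernel hc]
        ring
end

section
/- Under conditions a_k ≥ 0, ∑ a_k = 1, and ∑ a_k b_k = β < ∞, for z in the sector |arg z| < π − δ and |z| → ∞ one has K(z) = 1/z − β/z^2 + o(1/z^2), where K(z) = ∑_k a_k/(z + b_k). -/
open Complex Filter Topology Asymptotics Bornology
open scoped Real

/-!
Since `1/(z+b) - 1/z + b/z² = b²/(z²(z+b))`, the function `z² (K(z) - 1/z + β/z²)` equals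
`∑ aₖ bₖ · bₖ/(z+bₖ)`. In the sector, `|z + t| ≥ t sin δ` for `t ≥ 0`, so the terms are dominated
by `aₖ bₖ / sin δ`; each one tends to `0` as `|z| → ∞`, hence so does the sum (Tannery's theorem).
-/

section Sector

variable {δ : ℝ} {z : ℂ}

lemma neg_cos_mul_norm_le_re (hδ : 0 ≤ δ) (hz : |arg z| ≤ π - δ) :
    -(Real.cos δ * ‖z‖) ≤ z.re := by
  have hcos : Real.cos (π - δ) ≤ Real.cos |arg z| :=
    Real.cos_le_cos_of_nonneg_of_le_pi (abs_nonneg _) (by linarith) hz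
  rw [Real.cos_pi_sub, Real.cos_abs] at hcos
  nlinarith [norm_mul_cos_arg z, norm_nonneg z]

lemma norm_add_ofReal_sq_ge (hδ : 0 ≤ δ) (hz : |arg z| ≤ π - δ) {t : ℝ} (ht : 0 ≤ t) :
    ‖z‖ ^ 2 - 2 * t * ‖z‖ * Real.cos δ + t ^ 2 ≤ ‖z + t‖ ^ 2 := by
  have hsq : ‖z + t‖ ^ 2 = ‖z‖ ^ 2 + 2 * t * z.re + t ^ 2 := by
    simp only [Complex.sq_norm, normSq_apply, add_re, add_im, ofReal_re, ofReal_im, add_zero]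
    ring
  nlinarith [neg_cos_mul_norm_le_re hδ hz]

-- `‖z‖² - 2t‖z‖cos δ + t²` equals both `(t - ‖z‖ cos δ)² + (‖z‖ sin δ)²`
-- and `(‖z‖ - t cos δ)² + (t sin δ)²`.
lemma sin_mul_norm_le_norm_add_ofReal (hδ : 0 ≤ δ) (hz : |arg z| ≤ π - δ) {t : ℝ} (ht : 0 ≤ t) :
    Real.sin δ * ‖z‖ ≤ ‖z + t‖ := by
  refine le_of_sq_le_sq ?_ (norm_nonneg _)
  nlinarith [norm_add_ofReal_sq_ge hδ hz ht, Real.sin_sq_add_cos_sq δ,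
    sq_nonneg (t - ‖z‖ * Real.cos δ)]

lemma sin_mul_le_norm_add_ofReal (hδ : 0 ≤ δ) (hz : |arg z| ≤ π - δ) {t : ℝ} (ht : 0 ≤ t) :
    Real.sin δ * t ≤ ‖z + t‖ := by
  refine le_of_sq_le_sq ?_ (norm_nonneg _)
  nlinarith [norm_add_ofReal_sq_ge hδ hz ht, Real.sin_sq_add_cos_sq δ,
    sq_nonneg (‖z‖ - t * Real.cos δ)]

lemma sin_pos_of_abs_arg_lt (hδ : 0 < δ) (hz : |arg z| < π - δ) : 0 < Real.sin δ :=
  Real.sin_pos_of_pos_of_lt_pi hδ (by linarith [abs_nonneg (arg z)])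

lemma norm_ofReal_div_add_ofReal_le (hδ : 0 < δ) (hz : |arg z| < π - δ) {t : ℝ} (ht : 0 ≤ t) :
    ‖(t : ℂ) / (z + t)‖ ≤ 1 / Real.sin δ := by
  have hsin := sin_pos_of_abs_arg_lt hδ hz
  rw [norm_div, norm_real, Real.norm_of_nonneg ht]
  refine div_le_of_le_mul₀ (norm_nonneg _) (by positivity) ?_
  rw [one_div, inv_mul_eq_div, le_div_iff₀' hsin]
  exact sin_mul_le_norm_add_ofReal hδ.le hz.le ht

lemma add_ofReal_ne_zero (hδ : 0 < δ) (hz : |arg z| < π - δ) (hz0 : z ≠ 0) {t : ℝ} (ht : 0 ≤ t) :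
    z + t ≠ 0 := by
  rw [← norm_pos_iff] at hz0 ⊢
  exact (mul_pos (sin_pos_of_abs_arg_lt hδ hz) hz0).trans_le
    (sin_mul_norm_le_norm_add_ofReal hδ.le hz.le ht)

end Sector

lemma tendsto_ofReal_div_add_ofReal_cobounded (t : ℝ) :
    Tendsto (fun z : ℂ => (t : ℂ) / (z + t)) (cobounded ℂ) (𝓝 0) := by
  simpa [div_eq_mul_inv] using
    (tendsto_inv₀_cobounded.comp (tendsto_add_const_cobounded (t : ℂ))).const_mul (t : ℂ)

lemma sq_mul_div_add_sub_div_add_div_sq {z w : ℂ} (hz : z ≠ 0) (hzw : z + w ≠ 0) (c : ℂ) :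
    z ^ 2 * (c / (z + w) - c / z + c * w / z ^ 2) = c * w * (w / (z + w)) := by
  field_simp
  ring

section Stieltjes

variable {ι : Type*} {a b : ι → ℝ} {δ : ℝ}

lemma summable_div_add_ofReal (hb : ∀ k, 0 ≤ b k) (ha : Summable a) (hδ : 0 < δ) {z : ℂ}
    (hz : |arg z| < π - δ) (hz0 : z ≠ 0) :
    Summable fun k => (a k : ℂ) / (z + b k) := by
  have hsin := sin_pos_of_abs_arg_lt hδ hz
  refine ha.abs.div_const (Real.sin δ * ‖z‖) |>.of_norm_bounded fun k => ?_
  rw [norm_div, norm_real, Real.norm_eq_abs]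
  exact div_le_div_of_nonneg_left (abs_nonneg _) (by positivity)
    (sin_mul_norm_le_norm_add_ofReal hδ.le hz.le (hb k))

lemma sq_mul_tsum_div_add_sub (hb : ∀ k, 0 ≤ b k) (ha : Summable a)
    (hab : Summable fun k => a k * b k) (hδ : 0 < δ) {z : ℂ} (hz : |arg z| < π - δ) (hz0 : z ≠ 0) :
    z ^ 2 * (∑' k, (a k : ℂ) / (z + b k) - ((∑' k, a k : ℝ) / z - (∑' k, a k * b k : ℝ) / z ^ 2))
      = ∑' k, (a k * b k : ℂ) * (b k / (z + b k)) := by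
  have hsum := (((summable_div_add_ofReal hb ha hδ hz hz0).hasSum.sub
    ((hasSum_ofReal.mpr ha.hasSum).div_const z)).add
    ((hasSum_ofReal.mpr hab.hasSum).div_const (z ^ 2))).mul_left (z ^ 2)
  have hterm (k : ι) : z ^ 2 * ((a k : ℂ) / (z + b k) - a k / z + (a k * b k : ℝ) / z ^ 2)
      = (a k * b k : ℂ) * (b k / (z + b k)) := by
    push_cast
    exact sq_mul_div_add_sub_div_add_div_sq hz0 (add_ofReal_ne_zero hδ hz hz0 (hb k)) _
  rw [← tsum_congr hterm, hsum.tsum_eq]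
  ring

theorem tsum_div_add_ofReal_sub_isLittleO (hb : ∀ k, 0 ≤ b k) (ha : Summable a)
    (hab : Summable fun k => a k * b k) (hδ : 0 < δ) :
    (fun z : ℂ => ∑' k, (a k : ℂ) / (z + b k)
        - ((∑' k, a k : ℝ) / z - (∑' k, a k * b k : ℝ) / z ^ 2))
      =o[cobounded ℂ ⊓ 𝓟 {z | |arg z| < π - δ}] fun z => 1 / z ^ 2 := by
  have hz0 : ∀ᶠ z in cobounded ℂ ⊓ 𝓟 {z | |arg z| < π - δ}, z ≠ 0 :=
    (eventually_ne_cobounded 0).filter_mono inf_le_left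
  rw [isLittleO_iff_tendsto' (hz0.mono fun z hz h => absurd h (by simpa using hz))]
  have hsector : ∀ᶠ z in cobounded ℂ ⊓ 𝓟 {z | |arg z| < π - δ}, |arg z| < π - δ :=
    (eventually_principal.mpr fun _ => id).filter_mono inf_le_right
  have hlim : Tendsto (fun z : ℂ => ∑' k, (a k * b k : ℂ) * (b k / (z + b k)))
      (cobounded ℂ ⊓ 𝓟 {z | |arg z| < π - δ}) (𝓝 0) := by
    have := tendsto_tsum_of_dominated_convergence (g := fun k => (a k * b k : ℂ) * 0)
      (f := fun (z : ℂ) k => (a k * b k : ℂ) * (b k / (z + b k)))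
      (hab.abs.div_const (Real.sin δ))
      (fun k => ((tendsto_ofReal_div_add_ofReal_cobounded (b k)).const_mul _).mono_left inf_le_left)
      (hsector.mono fun z hz k => by
        rw [norm_mul, ← ofReal_mul, norm_real, Real.norm_eq_abs]
        exact (mul_le_mul_of_nonneg_left (norm_ofReal_div_add_ofReal_le hδ hz (hb k))
          (abs_nonneg _)).trans_eq (mul_one_div _ _))
    simpa using this
  refine hlim.congr' ?_
  filter_upwards [hz0, hsector] with z hz0 hz
  rw [← sq_mul_tsum_div_add_sub hb ha hab hδ hz hz0]
  field_simp

end Stieltjes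

theorem K_second_order_asymptotics_general (a b : ℕ → ℝ) (hb0 : 0 ≤ b 0)
    (hb : StrictMono b) (hsum : Summable a) (h1 : ∑' k, a k = 1)
    (β : ℝ) (hsum1 : Summable (fun k => a k * b k)) (hβ : ∑' k, a k * b k = β)
    (δ : ℝ) (hδ : 0 < δ) :
    (fun z : ℂ => (∑' k, (a k : ℂ) / (z + (b k : ℂ))) - (1/z - (β : ℂ)/z^2))
      =o[Filter.comap (fun z : ℂ => ‖z‖) Filter.atTop ⊓ Filter.principal {z : ℂ | |Complex.arg z| < Real.pi - δ}]
      (fun z : ℂ => 1/z^2) := by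
  have hb_nonneg (k : ℕ) : 0 ≤ b k := hb0.trans (hb.monotone k.zero_le)
  simpa [comap_norm_atTop, h1, hβ] using
    tsum_div_add_ofReal_sub_isLittleO hb_nonneg hsum hsum1 hδ

theorem K_second_order_asymptotics (a b : ℕ → ℝ) (ha : ∀ k, 0 ≤ a k) (hb0 : 0 ≤ b 0)
    (hb : StrictMono b) (hsum : Summable a) (h1 : ∑' k, a k = 1)
    (β : ℝ) (hsum1 : Summable (fun k => a k * b k)) (hβ : ∑' k, a k * b k = β)
    (δ : ℝ) (hδ : 0 < δ) :
    (fun z : ℂ => (∑' k, (a k : ℂ) / (z + (b k : ℂ))) - (1/z - (β : ℂ)/z^2))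
      =o[Filter.comap (fun z : ℂ => ‖z‖) Filter.atTop ⊓ Filter.principal {z : ℂ | |Complex.arg z| < Real.pi - δ}]
      (fun z : ℂ => 1/z^2) :=
  K_second_order_asymptotics_general a b hb0 hb hsum h1 β hsum1 hβ δ hδ
end
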